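/- Let B₁ and B₂ be connected finite simple graphs, each with at least 2 vertices. Then the tensor product H(B₁) ⊗ H(B₂) of their hairings is not isomorphic to the hairing H(B) of any finite simple graph B. -/

import Mathlib

/-- The hairing of `G`: attach a pendant vertex to every vertex of `G`.
Vertices `(u, false)` form the original graph and `(u, true)` is the pendant at `u`. -/
def hairing {V : Type*} (G : SimpleGraph V) : SimpleGraph (V × Bool) where
  Adj a b := (a.2 = false ∧ b.2 = false ∧ G.Adj a.1 b.1) ∨ (a.1 = b.1 ∧ a.2 ≠ b.2)
  symm := by
    constructor
    rintro a b (⟨ha, hb, hadj⟩ | ⟨h1, h2⟩)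
    · exact Or.inl ⟨hb, ha, hadj.symm⟩
    · exact Or.inr ⟨h1.symm, h2.symm⟩
  loopless := by
    constructor
    rintro a (⟨_, _, hadj⟩ | ⟨_, h⟩)
    · exact G.loopless.1 _ hadj
    · exact h rfl

/-- The tensor (Kronecker/categorical) product of two simple graphs. -/
def tensorProd {V W : Type*} (G : SimpleGraph V) (G' : SimpleGraph W) :
    SimpleGraph (V × W) where
  Adj a b := G.Adj a.1 b.1 ∧ G'.Adj a.2 b.2
  symm := ⟨fun _ _ h => ⟨h.1.symm, h.2.symm⟩⟩
  loopless := ⟨fun a h => G.loopless.1 a.1 h.1⟩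

/-!
Count leaves (vertices of degree one). In a hairing `H(B)` every pendant is a leaf, so at least
half of the vertices are leaves. If `B₁` and `B₂` have no isolated vertices, the leaves of
`H(B₁)` and `H(B₂)` are exactly their pendants, and a vertex of a tensor product is a leaf iff
both coordinates are; hence exactly a quarter of the vertices of `H(B₁) ⊗ H(B₂)` are leaves.
An isomorphism preserves both counts, and the vertex set is nonempty.
-/

namespace SimpleGraph

variable {V W : Type*}

def IsLeaf (G : SimpleGraph V) (x : V) : Prop := ∃! y, G.Adj x y

lemma Preconnected.exists_adj_of_two_le_card {G : SimpleGraph V} (h : G.Preconnected)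
    (hV : 2 ≤ Nat.card V) (v : V) : ∃ u, G.Adj v u :=
  have : Finite V := Nat.finite_of_card_ne_zero (by omega)
  have : Nontrivial V := Finite.one_lt_card_iff_nontrivial.mp hV
  h.exists_adj_of_nontrivial v

lemma Iso.isLeaf_iff {G : SimpleGraph V} {G' : SimpleGraph W} (e : G ≃g G') (x : V) :
    G'.IsLeaf (e x) ↔ G.IsLeaf x :=
  (e.toEquiv.existsUnique_congr fun _ => e.map_adj_iff.symm).symm

lemma Iso.card_leaves_eq {G : SimpleGraph V} {G' : SimpleGraph W} (e : G ≃g G') :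
    Nat.card {x // G.IsLeaf x} = Nat.card {y // G'.IsLeaf y} :=
  Nat.card_congr (e.toEquiv.subtypeEquiv fun x => (e.isLeaf_iff x).symm)

lemma isLeaf_tensorProd_iff (G : SimpleGraph V) (G' : SimpleGraph W) (x : V × W) :
    (tensorProd G G').IsLeaf x ↔ G.IsLeaf x.1 ∧ G'.IsLeaf x.2 := by
  constructor
  · rintro ⟨y, ⟨hy₁, hy₂⟩, huniq⟩
    exact ⟨⟨y.1, hy₁, fun z hz => congrArg Prod.fst (huniq (z, y.2) ⟨hz, hy₂⟩)⟩,
      ⟨y.2, hy₂, fun z hz => congrArg Prod.snd (huniq (y.1, z) ⟨hy₁, hz⟩)⟩⟩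
  · rintro ⟨⟨y₁, hy₁, huniq₁⟩, ⟨y₂, hy₂, huniq₂⟩⟩
    exact ⟨(y₁, y₂), ⟨hy₁, hy₂⟩, fun z hz => Prod.ext (huniq₁ _ hz.1) (huniq₂ _ hz.2)⟩

lemma isLeaf_hairing_pendant (G : SimpleGraph V) (u : V) : (hairing G).IsLeaf (u, true) := by
  refine ⟨(u, false), Or.inr ⟨rfl, by simp⟩, ?_⟩
  rintro ⟨v, b⟩ (⟨h, -, -⟩ | ⟨rfl, hb⟩)
  · simp at h
  · cases b <;> simp_all

lemma isLeaf_hairing_iff {G : SimpleGraph V} (hG : ∀ u, ∃ v, G.Adj u v) (x : V × Bool) :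
    (hairing G).IsLeaf x ↔ x.2 = true := by
  obtain ⟨u, _ | _⟩ := x
  · simp only [Bool.false_eq_true, iff_false]
    rintro ⟨y, -, huniq⟩
    obtain ⟨v, hv⟩ := hG u
    have h_base : (v, false) = y := huniq _ (Or.inl ⟨rfl, rfl, hv⟩)
    have h_pendant : (u, true) = y := huniq _ (Or.inr ⟨rfl, by simp⟩)
    simpa using h_base.trans h_pendant.symm
  · simpa using isLeaf_hairing_pendant G u

lemma card_le_card_leaves_hairing {U : Type*} [Finite U] (B : SimpleGraph U) :
    Nat.card U ≤ Nat.card {y // (hairing B).IsLeaf y} :=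
  Nat.card_le_card_of_injective (fun u => ⟨(u, true), isLeaf_hairing_pendant B u⟩)
    fun _ _ h => congrArg (fun y => y.1.1) h

lemma card_leaves_tensorProd_hairing {B₁ : SimpleGraph V} {B₂ : SimpleGraph W}
    (h₁ : ∀ u, ∃ v, B₁.Adj u v) (h₂ : ∀ u, ∃ v, B₂.Adj u v) :
    Nat.card {x // (tensorProd (hairing B₁) (hairing B₂)).IsLeaf x} = Nat.card V * Nat.card W := by
  rw [← Nat.card_prod]
  refine Nat.card_congr
    { toFun := fun x => (x.1.1.1, x.1.2.1)
      invFun := fun p => ⟨((p.1, true), (p.2, true)), by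
        simp [isLeaf_tensorProd_iff, isLeaf_hairing_iff h₁, isLeaf_hairing_iff h₂]⟩
      left_inv := ?_
      right_inv := fun _ => rfl }
  rintro ⟨⟨⟨u, b⟩, ⟨w, c⟩⟩, hx⟩
  simp only [isLeaf_tensorProd_iff, isLeaf_hairing_iff h₁, isLeaf_hairing_iff h₂] at hx
  obtain ⟨rfl, rfl⟩ := hx
  rfl

end SimpleGraph

open SimpleGraph in
theorem tensorProd_hairings_not_hairing_general {V W : Type*}
    (B₁ : SimpleGraph V) (B₂ : SimpleGraph W)
    (h₁ : B₁.Connected) (h₂ : B₂.Connected)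
    (hV : 2 ≤ Nat.card V) (hW : 2 ≤ Nat.card W) :
    ¬ ∃ (U : Type) (_ : Finite U) (B : SimpleGraph U),
        Nonempty (tensorProd (hairing B₁) (hairing B₂) ≃g hairing B) := by
  rintro ⟨U, _, B, ⟨e⟩⟩
  have h_leaves : Nat.card V * Nat.card W = Nat.card {y // (hairing B).IsLeaf y} := by
    rw [← card_leaves_tensorProd_hairing (h₁.preconnected.exists_adj_of_two_le_card hV)
      (h₂.preconnected.exists_adj_of_two_le_card hW), e.card_leaves_eq]
  have h_vertices : Nat.card ((V × Bool) × (W × Bool)) = Nat.card (U × Bool) :=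
    Nat.card_congr e.toEquiv
  simp only [Nat.card_prod, Nat.card_eq_fintype_card, Fintype.card_bool] at h_vertices
  nlinarith [card_le_card_leaves_hairing B]

/-- The tensor product of the hairings of two connected finite simple graphs, each with
at least 2 vertices, is not isomorphic to the hairing of any finite simple graph. -/
theorem tensorProd_hairings_not_hairing {V W : Type*} [Finite V] [Finite W]
    (B₁ : SimpleGraph V) (B₂ : SimpleGraph W)
    (h₁ : B₁.Connected) (h₂ : B₂.Connected)
    (hV : 2 ≤ Nat.card V) (hW : 2 ≤ Nat.card W) :
    ¬ ∃ (U : Type) (_ : Finite U) (B : SimpleGraph U),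
        Nonempty (tensorProd (hairing B₁) (hairing B₂) ≃g hairing B) :=
  tensorProd_hairings_not_hairing_general B₁ B₂ h₁ h₂ hV hW
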